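/- arXiv:1708.04908 — 3 statements merged into one kernel-verified Lean document; each statement's English description precedes it below -/
import Mathlib

section
/- Fix ε with 0 < ε < 1. Let G be drawn from G_{n,p} with p = c·log n / n, where c = c(n) ≥ 1 and (c−1)·log n → ∞ as n → ∞. Then with high probability the number of vertices of G whose degree is more than (1+ε)·np is at most n^{1−ε²c/4}. -/
open Filter
open scoped BigOperators Classical

noncomputable section

namespace CF

variable {V : Type*} [Fintype V] [DecidableEq V]

/-- The degree of a vertex `v` in the graph `G`. -/
def deg (G : SimpleGraph V) (v : V) : ℕ :=
  (Finset.univ.filter fun w => G.Adj v w).card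

/-- The edge bias `ψ(v,w) = 1 / min(d(v), d(w))` for adjacent `v, w`, and `0` otherwise. -/
def psi (G : SimpleGraph V) (v w : V) : ℝ :=
  if G.Adj v w then ((min (deg G v) (deg G w) : ℕ) : ℝ)⁻¹ else 0

/-- `Ψ(v) = Σ_{w ∈ N(v)} ψ(v,w)`  (the sum may be taken over all `w` since `ψ` vanishes
off the neighbourhood). -/
def Psi (G : SimpleGraph V) (v : V) : ℝ := ∑ w, psi G v w

/-- The stationary distribution `π(v) = Ψ(v) / Σ_u Ψ(u)` of the biased random walk. -/
def statPi (G : SimpleGraph V) (v : V) : ℝ := Psi G v / ∑ u, Psi G u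

/-- The one-step transition probability `P(v,w) = ψ(v,w)/Ψ(v)` of the biased random walk. -/
def step (G : SimpleGraph V) (v w : V) : ℝ := psi G v w / Psi G v

/-- The transition matrix of the biased random walk. -/
def stepMatrix (G : SimpleGraph V) : Matrix V V ℝ := Matrix.of fun v w => step G v w

/-- `R_v = Σ_{t=0}^{T-1} P^{(t)}(v,v)`, the expected number of visits to `v`
(including time 0) of the biased walk started at `v` during the first `T` steps. -/
def Rv (G : SimpleGraph V) (T : ℕ) (v : V) : ℝ :=
  ∑ t ∈ Finset.range T, (stepMatrix G ^ t) v v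

/-- Probability that a walk with transition kernel `P` follows the trajectory `x`
(conditional on starting at `x 0`). -/
def trajProbP (P : V → V → ℝ) {t : ℕ} (x : Fin (t + 1) → V) : ℝ :=
  ∏ i : Fin t, P (x i.castSucc) (x i.succ)

/-- Probability that the walk with kernel `P` started at `u` has not visited every
vertex among its positions at times `0, 1, …, t`. -/
def notCoveredProbP (P : V → V → ℝ) (u : V) (t : ℕ) : ℝ :=
  ∑ x ∈ Finset.univ.filter (fun x : Fin (t + 1) → V =>
      x 0 = u ∧ Finset.image x Finset.univ ≠ Finset.univ), trajProbP P x

/-- Expected cover time of the walk with kernel `P` started from `u`,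
via `E[T_cov] = Σ_{t ≥ 0} P(T_cov > t)`. -/
def coverTimeFromP (P : V → V → ℝ) (u : V) : ℝ := ∑' t : ℕ, notCoveredProbP P u t

/-- Cover time of the walk with kernel `P`: the maximum over starting vertices. -/
def coverTimeP (P : V → V → ℝ) : ℝ := ⨆ u, coverTimeFromP P u

/-- Expected time for the biased random walk started at `u` to visit every vertex. -/
def coverTimeFrom (G : SimpleGraph V) (u : V) : ℝ := coverTimeFromP (step G) u

/-- The cover time `C̄(G)` of the biased random walk on `G`. -/
def coverTime (G : SimpleGraph V) : ℝ := coverTimeP (step G)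

/-- Probability that the biased walk on `G` started at `w` avoids the set `F`
at all times `0, 1, …, t`. -/
def avoidProb (G : SimpleGraph V) (w : V) (t : ℕ) (F : Finset V) : ℝ :=
  ∑ x ∈ Finset.univ.filter (fun x : Fin (t + 1) → V =>
      x 0 = w ∧ ∀ i, x i ∉ F), trajProbP (step G) x

/-- `e(S,S)`: the number of edges of `G` with both endpoints in `S`. -/
def eIn (G : SimpleGraph V) (S : Finset V) : ℕ :=
  (Finset.univ.filter fun e : Sym2 V => e ∈ G.edgeSet ∧ ∀ x ∈ e, x ∈ S).card

/-- `e(S, S̄)`: the number of edges of `G` with exactly one endpoint in `S`. -/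
def eCross (G : SimpleGraph V) (S : Finset V) : ℕ :=
  (Finset.univ.filter fun e : Sym2 V =>
    e ∈ G.edgeSet ∧ ∃ x ∈ S, ∃ y ∈ Sᶜ, e = s(x, y)).card

/-- The graph obtained from `G` by contracting the (non-adjacent) vertices `u` and `v`
into a single vertex, represented by `u`; the vertex `v` is left isolated. -/
def contract (G : SimpleGraph V) (u v : V) : SimpleGraph V :=
  SimpleGraph.fromRel fun x y =>
    x ≠ v ∧ y ≠ v ∧ (G.Adj x y ∨ (x = u ∧ G.Adj v y))

/-- The graph on `Fin n` determined by a configuration of edge indicators. -/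
def graphOf {n : ℕ} (ω : Sym2 (Fin n) → Bool) : SimpleGraph (Fin n) :=
  SimpleGraph.fromRel fun x y => ω s(x, y)

/-- The product Bernoulli(p) weight of a configuration of edge indicators. -/
def wt {n : ℕ} (p : ℝ) (ω : Sym2 (Fin n) → Bool) : ℝ :=
  ∏ e : Sym2 (Fin n), (if ω e then p else 1 - p)

/-- The probability that the Erdős–Rényi random graph `G_{n,p}` satisfies `Q`. -/
def gnp (n : ℕ) (p : ℝ) (Q : SimpleGraph (Fin n) → Prop) : ℝ :=
  ∑ ω ∈ Finset.univ.filter (fun ω : Sym2 (Fin n) → Bool => Q (graphOf ω)), wt p ω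

/-- A graph `G` on vertex set `Fin n` is *typical* (for the parameters `ε` and `c`,
with `p = c log n / n`) if it satisfies conditions (a)–(i) of Lemma 4 (Cooper–Frieze–Petti). -/
def Typical (ε c : ℝ) {n : ℕ} (G : SimpleGraph (Fin n)) : Prop :=
  let p : ℝ := c * Real.log n / n
  let np : ℝ := (n : ℝ) * p
  let Lam : ℝ := Real.log (Real.log n)
  let A : Finset (Fin n) := Finset.univ.filter fun v => (deg G v : ℝ) < np / 100
  -- (a) connectivity
  G.Connected ∧
  -- (b) few vertices of low degree
  (((Finset.univ.filter fun v : Fin n => (deg G v : ℝ) < (1 - ε) * np).card : ℝ)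
      ≤ (n : ℝ) ^ (1 - ε ^ 2 * c / 4)) ∧
  -- (c) few vertices of high degree
  (((Finset.univ.filter fun v : Fin n => (1 + ε) * np < (deg G v : ℝ)).card : ℝ)
      ≤ (n : ℝ) ^ (1 - ε ^ 2 * c / 4)) ∧
  -- (d) maximum degree
  (∀ v : Fin n, (deg G v : ℝ) ≤ 4 * np) ∧
  -- (e) few vertices of each small degree
  (∀ k : ℕ, (k : ℝ) ≤ Lam →
      ((Finset.univ.filter fun v : Fin n => deg G v = k).card : ℝ)
        ≤ (3 * Real.log n) ^ (k + 1)) ∧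
  -- (f)(i) the set A of small-degree vertices is small
  ((A.card : ℝ) < (n : ℝ) ^ ((17 : ℝ) / 12 - c)) ∧
  -- (f)(ii) no vertex of A within distance Λ of a short cycle
  (∀ v ∈ A, ∀ x : Fin n, ∀ w : G.Walk x x, w.IsCycle → (w.length : ℝ) < Lam →
      ∀ y ∈ w.support, Lam < (G.dist v y : ℝ)) ∧
  -- (f)(iii) vertices of A are far apart
  (∀ u ∈ A, ∀ v ∈ A, u ≠ v → Lam < (G.dist u v : ℝ)) ∧
  -- (g) no small dense subgraphs
  (np ≤ (n : ℝ) ^ ((1 : ℝ) / 100) →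
      ∀ S : Finset (Fin n), S.card ≤ 50 → eIn G S ≤ S.card) ∧
  -- (h) edge expansion of large sets
  (∀ S : Finset (Fin n), 1 / p ≤ (S.card : ℝ) → (S.card : ℝ) ≤ (n : ℝ) / 2 →
      (S.card : ℝ) * ((n : ℝ) - S.card) * p / 2 ≤ (eCross G S : ℝ)) ∧
  -- (i) small sets are sparse
  (∀ S : Finset (Fin n), (S.card : ℝ) < 1 / p →
      (eIn G S : ℝ) < (S.card : ℝ) * np / 1000)

end CF

/-! A first-moment argument. By Chernoff's bound a fixed vertex has degree above `(1+ε)np` with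
probability at most `exp(-ε²np/3) = n^{-ε²c/3}`, so the expected number of such vertices is at most
`n^{1-ε²c/3}`, and by Markov's inequality there are more than `n^{1-ε²c/4}` of them with probability
at most `n^{-ε²c/12} ≤ n^{-ε²/12}`. When `p > 1` no vertex has such a degree at all. -/

open Finset Real

theorem mul_sum_filter_le_sum_mul {α : Type*} (s : Finset α) (w f : α → ℝ) (t : ℝ)
    (hw : ∀ a ∈ s, 0 ≤ w a) (hf : ∀ a ∈ s, 0 ≤ f a) :
    t * ∑ a ∈ s with t ≤ f a, w a ≤ ∑ a ∈ s, w a * f a := by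
  rw [mul_sum]
  calc ∑ a ∈ s with t ≤ f a, t * w a ≤ ∑ a ∈ s with t ≤ f a, w a * f a := by
        refine sum_le_sum fun a ha => ?_
        rw [mem_filter] at ha
        nlinarith [hw a ha.1]
    _ ≤ ∑ a ∈ s, w a * f a :=
        sum_le_sum_of_subset_of_nonneg (filter_subset _ _) fun a ha _ =>
          mul_nonneg (hw a ha) (hf a ha)

theorem exp_two_thirds_mul_sub_le {ε : ℝ} (hε0 : 0 ≤ ε) (hε1 : ε ≤ 1) :
    exp (2 * ε / 3) - 1 - (1 + ε) * (2 * ε / 3) ≤ -ε ^ 2 / 3 := by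
  have h := exp_bound' (x := 2 * ε / 3) (by positivity) (by linarith) (n := 2) two_pos
  rw [Finset.sum_range_succ, Finset.sum_range_one] at h
  norm_num at h
  nlinarith

theorem one_sub_add_mul_pow_le_exp {p x : ℝ} (hp0 : 0 ≤ p) (hp1 : p ≤ 1) (hx : 0 ≤ x) (m : ℕ) :
    (1 - p + p * x) ^ m ≤ exp (m * p * (x - 1)) := by
  calc (1 - p + p * x) ^ m ≤ exp (p * (x - 1)) ^ m := by
        refine pow_le_pow_left₀ (by nlinarith) ?_ m
        linarith [add_one_le_exp (p * (x - 1))]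
    _ = exp (m * p * (x - 1)) := by rw [← exp_nat_mul, mul_assoc]

section Bernoulli

variable {ι : Type*} [Fintype ι] {p : ℝ}

theorem prod_bernoulli_nonneg (hp0 : 0 ≤ p) (hp1 : p ≤ 1) (ω : ι → Bool) :
    0 ≤ ∏ i, (if ω i then p else 1 - p) :=
  prod_nonneg fun i _ => by split <;> linarith

variable [DecidableEq ι]

theorem sum_prod_bernoulli (p : ℝ) :
    ∑ ω : ι → Bool, ∏ i, (if ω i then p else 1 - p) = 1 := by
  rw [← Fintype.prod_sum (fun (_ : ι) (b : Bool) => if b then p else 1 - p)]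
  simp

theorem sum_prod_bernoulli_mul_pow_card_filter (p x : ℝ) (S : Finset ι) :
    ∑ ω : ι → Bool, (∏ i, (if ω i then p else 1 - p)) * x ^ #{i ∈ S | ω i}
      = (1 - p + p * x) ^ #S := by
  have hpow : ∀ ω : ι → Bool,
      x ^ #{i ∈ S | ω i} = ∏ i, (if i ∈ S then (if ω i then x else 1) else 1) := fun ω => by
    rw [← prod_filter, filter_mem_eq_inter, univ_inter, prod_ite, prod_const_one, mul_one,
      prod_const]
  calc ∑ ω : ι → Bool, (∏ i, (if ω i then p else 1 - p)) * x ^ #{i ∈ S | ω i}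
      = ∏ i, ∑ b : Bool,
          (if b then p else 1 - p) * (if i ∈ S then (if b then x else 1) else 1) := by
        rw [Fintype.prod_sum]
        simp only [hpow, ← prod_mul_distrib]
    _ = ∏ i, (if i ∈ S then 1 - p + p * x else 1) := by
        refine prod_congr rfl fun i _ => ?_
        split_ifs <;> simp only [Fintype.sum_bool, if_true, if_false, Bool.false_eq_true] <;> ring
    _ = (1 - p + p * x) ^ #S := by
        rw [← prod_filter, filter_mem_eq_inter, univ_inter, prod_const]

/-- Chernoff's bound for the upper tail of a sum of independent Bernoulli(`p`) variables. -/
theorem sum_prod_bernoulli_filter_lt_card_le {ε μ : ℝ} (hp0 : 0 ≤ p) (hp1 : p ≤ 1)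
    (hε0 : 0 ≤ ε) (hε1 : ε ≤ 1) (S : Finset ι) (hμ : #S * p ≤ μ) :
    ∑ ω : ι → Bool with (1 + ε) * μ < #{i ∈ S | ω i}, ∏ i, (if ω i then p else 1 - p)
      ≤ exp (-ε ^ 2 * μ / 3) := by
  set s := 2 * ε / 3
  have hs : 0 ≤ s := by positivity
  have hμ0 : 0 ≤ μ := le_trans (by positivity) hμ
  have hsub : ∀ ω : ι → Bool, (1 + ε) * μ < #{i ∈ S | ω i} →
      exp (s * ((1 + ε) * μ)) ≤ exp s ^ #{i ∈ S | ω i} := fun ω h => by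
    rw [← exp_nat_mul, exp_le_exp, mul_comm]
    exact mul_le_mul_of_nonneg_right h.le hs
  have hmarkov := mul_sum_filter_le_sum_mul univ
    (fun ω : ι → Bool => ∏ i, (if ω i then p else 1 - p)) (fun ω => exp s ^ #{i ∈ S | ω i})
    (exp (s * ((1 + ε) * μ))) (fun ω _ => prod_bernoulli_nonneg hp0 hp1 ω)
    (fun ω _ => by positivity)
  rw [sum_prod_bernoulli_mul_pow_card_filter] at hmarkov
  calc ∑ ω : ι → Bool with (1 + ε) * μ < #{i ∈ S | ω i}, ∏ i, (if ω i then p else 1 - p)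
      ≤ ∑ ω : ι → Bool with exp (s * ((1 + ε) * μ)) ≤ exp s ^ #{i ∈ S | ω i},
          ∏ i, (if ω i then p else 1 - p) := by
        refine sum_le_sum_of_subset_of_nonneg (fun ω => ?_) fun ω _ _ =>
          prod_bernoulli_nonneg hp0 hp1 ω
        simpa only [mem_filter, mem_univ, true_and] using hsub ω
    _ ≤ exp (-(s * ((1 + ε) * μ))) * (1 - p + p * exp s) ^ #S := by
        rw [exp_neg, ← div_eq_inv_mul, le_div_iff₀' (exp_pos _)]
        exact hmarkov
    _ ≤ exp (-(s * ((1 + ε) * μ))) * exp (#S * p * (exp s - 1)) := by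
        gcongr
        exact one_sub_add_mul_pow_le_exp hp0 hp1 (exp_pos s).le _
    _ ≤ exp (-(s * ((1 + ε) * μ))) * exp (μ * (exp s - 1)) := by
        gcongr
        linarith [one_le_exp hs]
    _ = exp (μ * (exp s - 1 - (1 + ε) * s)) := by
        rw [← exp_add]
        ring_nf
    _ ≤ exp (-ε ^ 2 * μ / 3) := by
        have key : exp s - 1 - (1 + ε) * s ≤ -ε ^ 2 / 3 := exp_two_thirds_mul_sub_le hε0 hε1
        rw [exp_le_exp]
        nlinarith [mul_le_mul_of_nonneg_left key hμ0]

end Bernoulli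

namespace CF

section Degree

variable {V : Type*} [Fintype V]

def highDegreeVertices (G : SimpleGraph V) (τ : ℝ) : Finset V :=
  {v | τ < (deg G v : ℝ)}

theorem deg_eq_degree (G : SimpleGraph V) (v : V) : deg G v = G.degree v := by
  rw [← SimpleGraph.card_neighborFinset_eq_degree, SimpleGraph.neighborFinset_eq_filter, deg]

theorem highDegreeVertices_eq_empty {G : SimpleGraph V} {τ : ℝ}
    (hτ : (Fintype.card V : ℝ) ≤ τ) : highDegreeVertices G τ = ∅ := by
  refine filter_false_of_mem fun v _ => not_lt.mpr (le_trans ?_ hτ)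
  rw [deg_eq_degree]
  exact_mod_cast (G.degree_lt_card_verts v).le

theorem deg_graphOf {n : ℕ} (ω : Sym2 (Fin n) → Bool) (v : Fin n) :
    deg (graphOf ω) v = #{e ∈ (⊤ : SimpleGraph (Fin n)).incidenceFinset v | ω e} := by
  rw [deg_eq_degree, ← SimpleGraph.card_incidenceFinset_eq_degree]
  congr 1
  ext e
  induction e with
  | h x y =>
    rw [SimpleGraph.mem_incidenceFinset]
    simp [graphOf, SimpleGraph.mk'_mem_incidenceSet_iff, Sym2.eq_swap]
    tauto

end Degree

variable {n : ℕ} {p : ℝ}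

theorem sum_wt (p : ℝ) : ∑ ω : Sym2 (Fin n) → Bool, wt p ω = 1 := by
  unfold wt
  exact sum_prod_bernoulli (ι := Sym2 (Fin n)) p

theorem gnp_add_gnp_not (n : ℕ) (p : ℝ) (Q : SimpleGraph (Fin n) → Prop) :
    gnp n p Q + gnp n p (fun G => ¬ Q G) = 1 := by
  rw [gnp, gnp, sum_filter_add_sum_filter_not]
  exact sum_wt p

theorem gnp_eq_one_of_forall {Q : SimpleGraph (Fin n) → Prop} (hQ : ∀ G, Q G) :
    gnp n p Q = 1 := by
  rw [gnp, filter_true_of_mem fun ω _ => hQ (graphOf ω)]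
  exact sum_wt p

theorem gnp_nonneg (hp0 : 0 ≤ p) (hp1 : p ≤ 1) (Q : SimpleGraph (Fin n) → Prop) :
    0 ≤ gnp n p Q :=
  sum_nonneg fun ω _ => prod_bernoulli_nonneg hp0 hp1 ω

theorem gnp_le_one (hp0 : 0 ≤ p) (hp1 : p ≤ 1) (Q : SimpleGraph (Fin n) → Prop) :
    gnp n p Q ≤ 1 := by
  linarith [gnp_add_gnp_not n p Q, gnp_nonneg hp0 hp1 (fun G => ¬ Q G)]

theorem gnp_lt_deg_le {ε : ℝ} (hp0 : 0 ≤ p) (hp1 : p ≤ 1) (hε0 : 0 ≤ ε) (hε1 : ε ≤ 1)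
    (v : Fin n) :
    gnp n p (fun G => (1 + ε) * (n * p) < deg G v) ≤ exp (-ε ^ 2 * (n * p) / 3) := by
  simp only [gnp, deg_graphOf]
  refine sum_prod_bernoulli_filter_lt_card_le hp0 hp1 hε0 hε1 _ ?_
  have hdeg : (⊤ : SimpleGraph (Fin n)).degree v = n - 1 := by simp
  rw [SimpleGraph.card_incidenceFinset_eq_degree, hdeg]
  gcongr
  exact_mod_cast n.sub_le 1

theorem sum_wt_mul_card_highDegreeVertices (p τ : ℝ) :
    ∑ ω : Sym2 (Fin n) → Bool, wt p ω * #(highDegreeVertices (graphOf ω) τ)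
      = ∑ v, gnp n p (fun G => τ < deg G v) := by
  simp only [highDegreeVertices, natCast_card_filter, mul_sum, gnp, sum_filter]
  rw [sum_comm]
  simp

theorem gnp_not_card_highDegreeVertices_le_le {ε B : ℝ} (hp0 : 0 ≤ p) (hp1 : p ≤ 1)
    (hε0 : 0 ≤ ε) (hε1 : ε ≤ 1) (hB : 0 < B) :
    gnp n p (fun G => ¬ (#(highDegreeVertices G ((1 + ε) * (n * p))) : ℝ) ≤ B)
      ≤ n * exp (-ε ^ 2 * (n * p) / 3) / B := by
  set τ := (1 + ε) * (n * p)
  have hmarkov := mul_sum_filter_le_sum_mul univ (wt (n := n) p)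
    (fun ω => (#(highDegreeVertices (graphOf ω) τ) : ℝ)) B
    (fun ω _ => prod_bernoulli_nonneg hp0 hp1 ω) (fun ω _ => by positivity)
  rw [sum_wt_mul_card_highDegreeVertices] at hmarkov
  rw [le_div_iff₀' hB]
  calc B * gnp n p (fun G => ¬ (#(highDegreeVertices G τ) : ℝ) ≤ B)
      ≤ B * ∑ ω with B ≤ (#(highDegreeVertices (graphOf ω) τ) : ℝ), wt p ω := by
        refine mul_le_mul_of_nonneg_left (sum_le_sum_of_subset_of_nonneg (fun ω => ?_)
          fun ω _ _ => prod_bernoulli_nonneg hp0 hp1 ω) hB.le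
        simp only [mem_filter, mem_univ, true_and, not_le]
        exact le_of_lt
    _ ≤ ∑ v, gnp n p (fun G => τ < deg G v) := hmarkov
    _ ≤ ∑ _v : Fin n, exp (-ε ^ 2 * (n * p) / 3) :=
        sum_le_sum fun v _ => gnp_lt_deg_le hp0 hp1 hε0 hε1 v
    _ = n * exp (-ε ^ 2 * (n * p) / 3) := by simp

theorem gnp_card_highDegreeVertices_le_eq_one {ε B : ℝ} (hp : 1 < p) (hε0 : 0 ≤ ε)
    (hB : 0 ≤ B) :
    gnp n p (fun G => (#(highDegreeVertices G ((1 + ε) * (n * p))) : ℝ) ≤ B) = 1 := by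
  refine gnp_eq_one_of_forall fun G => ?_
  rw [highDegreeVertices_eq_empty, card_empty, Nat.cast_zero]
  · exact hB
  · rw [Fintype.card_fin]
    have hn : (0 : ℝ) ≤ n := n.cast_nonneg
    nlinarith [mul_le_mul_of_nonneg_left hp.le hn]

theorem gnp_card_highDegreeVertices_le_le_one {ε B : ℝ} (hp0 : 0 ≤ p) (hε0 : 0 ≤ ε)
    (hB : 0 ≤ B) :
    gnp n p (fun G => (#(highDegreeVertices G ((1 + ε) * (n * p))) : ℝ) ≤ B) ≤ 1 := by
  rcases le_or_gt p 1 with hp1 | hp1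
  · exact gnp_le_one hp0 hp1 _
  · exact (gnp_card_highDegreeVertices_le_eq_one hp1 hε0 hB).le

theorem one_sub_rpow_le_gnp_card_highDegreeVertices_le {ε c : ℝ} (hε0 : 0 < ε) (hε1 : ε ≤ 1)
    (hc : 1 ≤ c) (hn : 1 ≤ n) :
    1 - (n : ℝ) ^ (-(ε ^ 2 / 12)) ≤ gnp n (c * log n / n) (fun G =>
      (#(highDegreeVertices G ((1 + ε) * (n * (c * log n / n)))) : ℝ)
        ≤ (n : ℝ) ^ (1 - ε ^ 2 * c / 4)) := by
  have hn0 : (0 : ℝ) < n := by exact_mod_cast hn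
  have hp0 : 0 ≤ c * log n / n :=
    div_nonneg (mul_nonneg (zero_le_one.trans hc) (log_natCast_nonneg n)) hn0.le
  have hnp : (n : ℝ) * (c * log n / n) = c * log n := mul_div_cancel₀ _ hn0.ne'
  rcases le_or_gt (c * log n / n) 1 with hp1 | hp1
  · have hnot := gnp_not_card_highDegreeVertices_le_le (n := n) hp0 hp1 hε0.le hε1
      (rpow_pos_of_pos hn0 (1 - ε ^ 2 * c / 4))
    have hrate : (n : ℝ) * exp (-ε ^ 2 * (n * (c * log n / n)) / 3) / n ^ (1 - ε ^ 2 * c / 4)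
        ≤ (n : ℝ) ^ (-(ε ^ 2 / 12)) := by
      calc (n : ℝ) * exp (-ε ^ 2 * (n * (c * log n / n)) / 3) / n ^ (1 - ε ^ 2 * c / 4)
          = (n : ℝ) ^ (-(ε ^ 2 * c / 12)) := by
            rw [hnp, rpow_def_of_pos hn0, rpow_def_of_pos hn0]
            nth_rewrite 1 [← exp_log hn0]
            rw [← exp_add, ← exp_sub]
            congr 1
            ring
        _ ≤ (n : ℝ) ^ (-(ε ^ 2 / 12)) := by
            refine rpow_le_rpow_of_exponent_le (Nat.one_le_cast.mpr hn) ?_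
            nlinarith [sq_nonneg ε]
    linarith [gnp_add_gnp_not n (c * log n / n) (fun G =>
      (#(highDegreeVertices G ((1 + ε) * (n * (c * log n / n)))) : ℝ)
        ≤ (n : ℝ) ^ (1 - ε ^ 2 * c / 4))]
  · rw [gnp_card_highDegreeVertices_le_eq_one hp1 hε0.le (rpow_nonneg hn0.le _)]
    linarith [rpow_nonneg hn0.le (-(ε ^ 2 / 12))]

end CF

theorem gnp_few_high_degree_vertices_general (ε : ℝ) (hε0 : 0 < ε) (hε1 : ε < 1)
    (c : ℕ → ℝ) (hc : ∀ n, 1 ≤ c n) :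
    Filter.Tendsto (fun n : ℕ =>
      CF.gnp n (c n * Real.log n / n) (fun G =>
        ((Finset.univ.filter fun v : Fin n =>
            (1 + ε) * ((n : ℝ) * (c n * Real.log n / n)) < (CF.deg G v : ℝ)).card : ℝ)
          ≤ (n : ℝ) ^ (1 - ε ^ 2 * c n / 4)))
      Filter.atTop (nhds 1) := by
  have hlower : Tendsto (fun n : ℕ => 1 - (n : ℝ) ^ (-(ε ^ 2 / 12))) atTop (nhds 1) := by
    simpa using ((tendsto_rpow_neg_atTop (by positivity)).comp
      tendsto_natCast_atTop_atTop).const_sub 1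
  refine tendsto_of_tendsto_of_tendsto_of_le_of_le' hlower tendsto_const_nhds ?_ ?_ <;>
    filter_upwards [eventually_ge_atTop 1] with n hn
  · exact CF.one_sub_rpow_le_gnp_card_highDegreeVertices_le hε0 hε1.le (hc n) hn
  · have hp0 : 0 ≤ c n * log n / n :=
      div_nonneg (mul_nonneg (zero_le_one.trans (hc n)) (log_natCast_nonneg n)) n.cast_nonneg
    exact CF.gnp_card_highDegreeVertices_le_le_one hp0 hε0.le (rpow_nonneg n.cast_nonneg _)

/-- For fixed `0 < ε < 1` and `G ~ G_{n,p}` with `p = c log n / n`,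
`c = c(n) ≥ 1`, `(c-1) log n → ∞`, whp at most `n^{1-ε²c/4}` vertices have degree
more than `(1+ε) n p`. -/
theorem gnp_few_high_degree_vertices (ε : ℝ) (hε0 : 0 < ε) (hε1 : ε < 1)
    (c : ℕ → ℝ) (hc : ∀ n, 1 ≤ c n)
    (hgrow : Filter.Tendsto (fun n : ℕ => (c n - 1) * Real.log n) Filter.atTop Filter.atTop) :
    Filter.Tendsto (fun n : ℕ =>
      CF.gnp n (c n * Real.log n / n) (fun G =>
        ((Finset.univ.filter fun v : Fin n =>
            (1 + ε) * ((n : ℝ) * (c n * Real.log n / n)) < (CF.deg G v : ℝ)).card : ℝ)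
          ≤ (n : ℝ) ^ (1 - ε ^ 2 * c n / 4)))
      Filter.atTop (nhds 1) :=
  gnp_few_high_degree_vertices_general ε hε0 hε1 c hc
end
end

section
/- Let G be a connected graph on n vertices and let np denote a parameter such that every vertex of G has degree at most 4·np and at most one neighbor of degree less than np/100, and every vertex has degree at least 1. Then for every vertex v, 1 ≤ Ψ(v) ≤ 401, and consequently the stationary distribution satisfies 1/(401·n) ≤ π(v) ≤ 401/n for every vertex v. Moreover, for any ε ∈ (0,1), if u is a vertex such that u and all of its neighbors have degree in the interval ((1−ε)·np, (1+ε)·np), then 1 ≤ Ψ(u) ≤ (1+ε)/(1−ε). -/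
/-!
Each term `1 / min(d(v), d(w))` of `Ψ(v)` is at least `1 / d(v)`, so `Ψ(v) ≥ 1`. For the upper
bound, the (at most one) neighbour of degree `< np/100` contributes at most `1`, and every other
term is at most `max(1/d(v), 100/np)`, so together they contribute at most
`max(1, 100 d(v)/np) ≤ 400`. Summing `1 ≤ Ψ ≤ 401` over the `n` vertices bounds `π(v) = Ψ(v)/ΣΨ`,
and near-regularity around `u` gives every term of `Ψ(u)` at most `1/((1-ε)np)` with fewer than
`(1+ε)np` terms.
-/

open Filter
open scoped BigOperators Classical

noncomputable section

namespace CF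

open Finset

variable {V : Type*} [Fintype V] {G : SimpleGraph V} {v : V}

lemma Psi_eq_sum_adj (G : SimpleGraph V) (v : V) :
    Psi G v = ∑ w ∈ univ.filter (G.Adj v), ((min (deg G v) (deg G w) : ℕ) : ℝ)⁻¹ := by
  rw [Psi, sum_filter]
  rfl

lemma deg_pos_of_adj {w : V} (h : G.Adj v w) : 0 < deg G v :=
  card_pos.mpr ⟨w, mem_filter.mpr ⟨mem_univ w, h⟩⟩

lemma min_deg_pos_of_adj {w : V} (h : G.Adj v w) :
    (0 : ℝ) < (min (deg G v) (deg G w) : ℕ) := by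
  exact_mod_cast lt_min (deg_pos_of_adj h) (deg_pos_of_adj h.symm)

lemma Psi_le_deg_mul {b : ℝ} (hb : ∀ w, G.Adj v w → ((min (deg G v) (deg G w) : ℕ) : ℝ)⁻¹ ≤ b) :
    Psi G v ≤ deg G v * b := by
  rw [Psi_eq_sum_adj, ← nsmul_eq_mul]
  exact sum_le_card_nsmul _ _ _ fun w hw => hb w (mem_filter.mp hw).2

lemma one_le_Psi (hv : 1 ≤ deg G v) : 1 ≤ Psi G v := by
  have hv' : (0 : ℝ) < deg G v := by exact_mod_cast hv
  have hterm : ∀ w ∈ univ.filter (G.Adj v), ((deg G v : ℝ))⁻¹ ≤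
      ((min (deg G v) (deg G w) : ℕ) : ℝ)⁻¹ := fun w hw =>
    inv_anti₀ (min_deg_pos_of_adj (mem_filter.mp hw).2) (by exact_mod_cast min_le_left _ _)
  calc (1 : ℝ) = #(univ.filter (G.Adj v)) • ((deg G v : ℝ))⁻¹ := by
        rw [nsmul_eq_mul]; exact (mul_inv_cancel₀ hv'.ne').symm
    _ ≤ Psi G v := by rw [Psi_eq_sum_adj]; exact card_nsmul_le_sum _ _ _ hterm

lemma Psi_le_deg_div {a : ℝ} (ha : 0 < a) (hv : a ≤ deg G v)
    (hnbr : ∀ w, G.Adj v w → a ≤ deg G w) : Psi G v ≤ deg G v / a := by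
  refine (Psi_le_deg_mul fun w hw => inv_anti₀ ha ?_).trans_eq (div_eq_mul_inv _ _).symm
  push_cast
  exact le_min hv (hnbr w hw)

lemma inv_min_deg_le_max_inv {w : V} {t : ℝ} (ht : 0 < t) (hw : t ≤ deg G w) :
    ((min (deg G v) (deg G w) : ℕ) : ℝ)⁻¹ ≤ max ((deg G v : ℝ))⁻¹ t⁻¹ := by
  rw [Nat.cast_min]
  rcases le_total (deg G v : ℝ) (deg G w) with h | h
  · exact (min_eq_left h).symm ▸ le_max_left _ _
  · exact (min_eq_right h).symm ▸ (inv_anti₀ ht hw).trans (le_max_right _ _)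

lemma Psi_le_card_low_add_max {t : ℝ} (ht : 0 < t) :
    Psi G v ≤ #(univ.filter fun w => G.Adj v w ∧ (deg G w : ℝ) < t) + max 1 (deg G v / t) := by
  set low : V → Prop := fun w => (deg G w : ℝ) < t
  set f : V → ℝ := fun w => ((min (deg G v) (deg G w) : ℕ) : ℝ)⁻¹
  have hlow : ∑ w ∈ (univ.filter (G.Adj v)).filter low, f w ≤
      #(univ.filter fun w => G.Adj v w ∧ low w) := by
    rw [filter_filter, ← mul_one (#_ : ℝ), ← nsmul_eq_mul]
    refine sum_le_card_nsmul _ _ _ fun w hw => inv_le_one_of_one_le₀ ?_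
    exact_mod_cast min_deg_pos_of_adj (mem_filter.mp hw).2.1
  have hhigh : ∑ w ∈ (univ.filter (G.Adj v)).filter (¬ low ·), f w ≤ max 1 (deg G v / t) := by
    have hterm : ∀ w ∈ (univ.filter (G.Adj v)).filter (¬ low ·),
        f w ≤ max ((deg G v : ℝ))⁻¹ t⁻¹ := fun w hw =>
      inv_min_deg_le_max_inv ht (not_lt.mp (mem_filter.mp hw).2)
    have hcard : (#((univ.filter (G.Adj v)).filter (¬ low ·)) : ℝ) ≤ deg G v := by
      exact_mod_cast card_filter_le _ _
    calc _ ≤ #((univ.filter (G.Adj v)).filter (¬ low ·)) • max ((deg G v : ℝ))⁻¹ t⁻¹ :=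
          sum_le_card_nsmul _ _ _ hterm
      _ ≤ deg G v * max ((deg G v : ℝ))⁻¹ t⁻¹ := by
          rw [nsmul_eq_mul]; gcongr
      _ ≤ max 1 (deg G v / t) := by
          rw [mul_max_of_nonneg _ _ (Nat.cast_nonneg _), div_eq_mul_inv]
          exact max_le_max_right _ (mul_inv_le_one)
  rw [Psi_eq_sum_adj, ← sum_filter_add_sum_filter_not _ low]
  exact add_le_add hlow hhigh

lemma card_le_sum_Psi (hlo : ∀ u, 1 ≤ Psi G u) : (Fintype.card V : ℝ) ≤ ∑ u, Psi G u := by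
  simpa using sum_le_sum fun u (_ : u ∈ univ) => hlo u

lemma sum_Psi_le_mul_card {C : ℝ} (hhi : ∀ u, Psi G u ≤ C) :
    ∑ u, Psi G u ≤ C * Fintype.card V := by
  simpa [mul_comm] using sum_le_sum fun u (_ : u ∈ univ) => hhi u

lemma statPi_mem_bounds {C : ℝ} (hlo : ∀ u, 1 ≤ Psi G u) (hhi : ∀ u, Psi G u ≤ C) (v : V) :
    1 / (C * Fintype.card V) ≤ statPi G v ∧ statPi G v ≤ C / Fintype.card V := by
  have hcard : (0 : ℝ) < Fintype.card V := by exact_mod_cast Fintype.card_pos_iff.mpr ⟨v⟩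
  have hsum := card_le_sum_Psi hlo
  exact ⟨div_le_div₀ (zero_le_one.trans (hlo v)) (hlo v) (hcard.trans_le hsum)
      (sum_Psi_le_mul_card hhi),
    div_le_div₀ (zero_le_one.trans ((hlo v).trans (hhi v))) (hhi v) hcard hsum⟩

end CF

theorem psi_and_stationary_bounds_general
    {V : Type*} [Fintype V] (n : ℕ) (hn : Fintype.card V = n)
    (G : SimpleGraph V) (np : ℝ)
    (hmax : ∀ v : V, (CF.deg G v : ℝ) ≤ 4 * np)
    (hlow : ∀ v : V,
      (Finset.univ.filter fun w => G.Adj v w ∧ (CF.deg G w : ℝ) < np / 100).card ≤ 1)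
    (hmin : ∀ v : V, 1 ≤ CF.deg G v) :
    (∀ v : V, 1 ≤ CF.Psi G v ∧ CF.Psi G v ≤ 401) ∧
    (∀ v : V, 1 / (401 * (n : ℝ)) ≤ CF.statPi G v ∧ CF.statPi G v ≤ 401 / (n : ℝ)) ∧
    (∀ ε : ℝ, 0 < ε → ε < 1 → ∀ u : V,
      ((1 - ε) * np < (CF.deg G u : ℝ) ∧ (CF.deg G u : ℝ) < (1 + ε) * np ∧
        ∀ w : V, G.Adj u w →
          (1 - ε) * np < (CF.deg G w : ℝ) ∧ (CF.deg G w : ℝ) < (1 + ε) * np) →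
      1 ≤ CF.Psi G u ∧ CF.Psi G u ≤ (1 + ε) / (1 - ε)) := by
  have hnp : ∀ v : V, 0 < np := fun v => by
    have : (1 : ℝ) ≤ CF.deg G v := by exact_mod_cast hmin v
    linarith [hmax v]
  have hPsi : ∀ v, 1 ≤ CF.Psi G v ∧ CF.Psi G v ≤ 401 := fun v => by
    refine ⟨CF.one_le_Psi (hmin v),
      (CF.Psi_le_card_low_add_max (t := np / 100) (by linarith [hnp v])).trans ?_⟩
    have hratio : (CF.deg G v : ℝ) / (np / 100) ≤ 400 := by
      rw [div_le_iff₀ (by linarith [hnp v])]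
      linarith [hmax v]
    have hlow' : ((Finset.univ.filter fun w =>
        G.Adj v w ∧ (CF.deg G w : ℝ) < np / 100).card : ℝ) ≤ 1 := by
      exact_mod_cast hlow v
    linarith [max_le (by norm_num : (1 : ℝ) ≤ 400) hratio]
  refine ⟨hPsi, hn ▸ CF.statPi_mem_bounds (fun v => (hPsi v).1) (fun v => (hPsi v).2),
    fun ε hε0 hε1 u ⟨hu_lo, hu_hi, hnbr⟩ => ⟨CF.one_le_Psi (hmin u), ?_⟩⟩
  have ha : 0 < (1 - ε) * np := mul_pos (by linarith) (hnp u)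
  calc CF.Psi G u ≤ CF.deg G u / ((1 - ε) * np) :=
        CF.Psi_le_deg_div ha hu_lo.le fun w hw => (hnbr w hw).1.le
    _ ≤ (1 + ε) * np / ((1 - ε) * np) := by gcongr
    _ = (1 + ε) / (1 - ε) := mul_div_mul_right _ _ (hnp u).ne'

/-- If every vertex of a connected graph `G` on `n` vertices has
degree at most `4np`, at most one neighbour of degree `< np/100`, and degree at least 1,
then `1 ≤ Ψ(v) ≤ 401` and `1/(401 n) ≤ π(v) ≤ 401/n` for all `v`; moreover for
`ε ∈ (0,1)`, if `u` and all its neighbours have degrees in `((1-ε)np, (1+ε)np)` then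
`1 ≤ Ψ(u) ≤ (1+ε)/(1-ε)`. -/
theorem psi_and_stationary_bounds
    {V : Type*} [Fintype V] [DecidableEq V] (n : ℕ) (hn : Fintype.card V = n)
    (G : SimpleGraph V) (hconn : G.Connected) (np : ℝ)
    (hmax : ∀ v : V, (CF.deg G v : ℝ) ≤ 4 * np)
    (hlow : ∀ v : V,
      (Finset.univ.filter fun w => G.Adj v w ∧ (CF.deg G w : ℝ) < np / 100).card ≤ 1)
    (hmin : ∀ v : V, 1 ≤ CF.deg G v) :
    (∀ v : V, 1 ≤ CF.Psi G v ∧ CF.Psi G v ≤ 401) ∧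
    (∀ v : V, 1 / (401 * (n : ℝ)) ≤ CF.statPi G v ∧ CF.statPi G v ≤ 401 / (n : ℝ)) ∧
    (∀ ε : ℝ, 0 < ε → ε < 1 → ∀ u : V,
      ((1 - ε) * np < (CF.deg G u : ℝ) ∧ (CF.deg G u : ℝ) < (1 + ε) * np ∧
        ∀ w : V, G.Adj u w →
          (1 - ε) * np < (CF.deg G w : ℝ) ∧ (CF.deg G w : ℝ) < (1 + ε) * np) →
      1 ≤ CF.Psi G u ∧ CF.Psi G u ≤ (1 + ε) / (1 - ε)) :=
  psi_and_stationary_bounds_general n hn G np hmax hlow hmin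
end
end

section
/- Let G be a connected graph and let u ≠ v be two non-adjacent vertices at graph distance greater than 2 (so u and v have no common neighbor), such that every neighbor x of u satisfies d(x) ≤ d(u) and every neighbor x of v satisfies d(x) ≤ d(v). Let Γ be the graph obtained from G by contracting u and v into a single vertex z (so z is adjacent in Γ exactly to N_G(u) ∪ N_G(v)). Then for every starting vertex w ∉ {u,v} and every t ≥ 0, the probability that the biased random walk on Γ started at w does not visit z during its first t steps equals the probability that the biased random walk on G started at w visits neither u nor v during its first t steps. -/
open Filter
open scoped BigOperators Classical

noncomputable section

/-!
For `x ∉ {u, v}` the contraction changes nothing the biased walk sees. Since `d(u, v) > 2`,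
`x` has at most one neighbour in `{u, v}`, and that edge becomes an edge to the merged vertex,
so `d(x)` is unchanged; as `d(x) ≤ d(u), d(v) ≤ d(z)`, the bias on that edge is `1/d(x)` both
before and after. Hence `Ψ(x)` and all transition probabilities between vertices outside
`{u, v}` agree. The vertex `v` is isolated in the contraction, so it can only be visited at
time `0`, and avoiding `z = u` in `Γ` is the same event as avoiding `{u, v}`, with the same
trajectory weights.
-/

theorem SimpleGraph.not_adj_and_adj_of_two_lt_dist {V : Type*} {G : SimpleGraph V}
    {u v : V} (h : 2 < G.dist u v) (x : V) : ¬ (G.Adj x u ∧ G.Adj x v) := by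
  rintro ⟨hxu, hxv⟩
  have : G.dist u v ≤ 2 := G.dist_le (hxu.symm.toWalk.append hxv.toWalk)
  omega

namespace CF

section Avoidance

variable {V : Type*} [Fintype V] [DecidableEq V]

def avoidProbP (P : V → V → ℝ) (w : V) (t : ℕ) (F : Finset V) : ℝ :=
  ∑ x ∈ Finset.univ.filter (fun x : Fin (t + 1) → V => x 0 = w ∧ ∀ i, x i ∉ F),
    trajProbP P x

theorem avoidProb_eq_avoidProbP (G : SimpleGraph V) (w : V) (t : ℕ) (F : Finset V) :
    avoidProb G w t F = avoidProbP (step G) w t F := rfl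

variable {P Q : V → V → ℝ} {w : V} {t : ℕ} {F : Finset V}

theorem avoidProbP_congr (h : ∀ x y, x ∉ F → y ∉ F → P x y = Q x y) :
    avoidProbP P w t F = avoidProbP Q w t F :=
  Finset.sum_congr rfl fun _ hx => Finset.prod_congr rfl fun _ _ =>
    h _ _ ((Finset.mem_filter.1 hx).2.2 _) ((Finset.mem_filter.1 hx).2.2 _)

theorem avoidProbP_insert_of_forall_eq_zero {a : V} (hP : ∀ x, P x a = 0) (hw : w ≠ a) :
    avoidProbP P w t (insert a F) = avoidProbP P w t F := by
  refine Finset.sum_subset (fun x hx => ?_) fun x hx hx' => ?_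
  · simp only [Finset.mem_filter, Finset.mem_univ, true_and, Finset.mem_insert,
      not_or] at hx ⊢
    exact ⟨hx.1, fun i => (hx.2 i).2⟩
  · simp only [Finset.mem_filter, Finset.mem_univ, true_and, Finset.mem_insert, not_or,
      not_and, not_forall, not_not] at hx hx'
    obtain ⟨i, hi⟩ := hx' hx.1
    have hia : x i = a := by_contra fun h => hx.2 i (hi h)
    obtain ⟨j, rfl⟩ :=
      Fin.exists_succ_eq_of_ne_zero fun h : i = 0 => hw (by rw [← hx.1, ← h, hia])
    exact Finset.prod_eq_zero (Finset.mem_univ j) (by rw [hia, hP])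

end Avoidance

section Contraction

variable {V : Type*} {G : SimpleGraph V} {u v x y : V}

theorem contract_adj_of_ne (hx : x ≠ u) (hx' : x ≠ v) (hy : y ≠ u) (hy' : y ≠ v) :
    (contract G u v).Adj x y ↔ G.Adj x y := by
  simp only [contract, SimpleGraph.fromRel_adj]
  constructor
  · rintro ⟨-, ⟨-, -, h | ⟨rfl, -⟩⟩ | ⟨-, -, h | ⟨rfl, -⟩⟩⟩
    exacts [h, absurd rfl hx, h.symm, absurd rfl hy]
  · exact fun h => ⟨h.ne, .inl ⟨hx', hy', .inl h⟩⟩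

theorem contract_not_adj_right : ¬ (contract G u v).Adj x v := by
  simp [contract, SimpleGraph.fromRel_adj]

theorem contract_adj_left_iff (huv : u ≠ v) (hx : x ≠ u) (hx' : x ≠ v) :
    (contract G u v).Adj x u ↔ G.Adj x u ∨ G.Adj x v := by
  simp only [contract, SimpleGraph.fromRel_adj]
  constructor
  · rintro ⟨-, ⟨-, -, h | ⟨rfl, -⟩⟩ | ⟨-, -, h | ⟨-, h⟩⟩⟩
    exacts [.inl h, absurd rfl hx, .inl h.symm, .inr h.symm]
  · rintro (h | h)
    · exact ⟨hx, .inl ⟨hx', huv, .inl h⟩⟩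
    · exact ⟨hx, .inr ⟨huv, hx', .inr ⟨trivial, h.symm⟩⟩⟩

theorem contract_left_adj_of_adj (huv : u ≠ v) (hnadj : ¬ G.Adj u v)
    (h : G.Adj u y ∨ G.Adj v y) : (contract G u v).Adj u y := by
  have hyu : y ≠ u := by rintro rfl; exact h.elim G.irrefl (hnadj ·.symm)
  have hyv : y ≠ v := by rintro rfl; exact h.elim hnadj G.irrefl
  exact (contract_adj_left_iff huv hyu hyv).2 (h.imp G.adj_symm G.adj_symm) |>.symm

variable [Fintype V]

theorem deg_le_deg_contract_left (huv : u ≠ v) (hnadj : ¬ G.Adj u v) :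
    deg G u ≤ deg (contract G u v) u :=
  Finset.card_le_card fun _ hy => by
    simp only [Finset.mem_filter, Finset.mem_univ, true_and] at hy ⊢
    exact contract_left_adj_of_adj huv hnadj (.inl hy)

theorem deg_le_deg_contract_right (huv : u ≠ v) (hnadj : ¬ G.Adj u v) :
    deg G v ≤ deg (contract G u v) u :=
  Finset.card_le_card fun _ hy => by
    simp only [Finset.mem_filter, Finset.mem_univ, true_and] at hy ⊢
    exact contract_left_adj_of_adj huv hnadj (.inr hy)

theorem sum_contract_adj_ite {M : Type*} [AddCommMonoid M] (huv : u ≠ v) (hx : x ≠ u)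
    (hx' : x ≠ v) (hcommon : ¬ (G.Adj x u ∧ G.Adj x v)) (c c' : V → M)
    (hc : ∀ y, y ≠ u → y ≠ v → c' y = c y) (hcu : G.Adj x u → c' u = c u)
    (hcv : G.Adj x v → c' u = c v) :
    ∑ y, (if (contract G u v).Adj x y then c' y else 0) =
      ∑ y, if G.Adj x y then c y else 0 := by
  rw [← Finset.sum_add_sum_compl {u, v}, ← Finset.sum_add_sum_compl {u, v},
    Finset.sum_pair huv, Finset.sum_pair huv]
  congr 1
  · rw [if_neg contract_not_adj_right, contract_adj_left_iff huv hx hx']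
    by_cases hxu : G.Adj x u <;> by_cases hxv : G.Adj x v <;> simp_all
  · refine Finset.sum_congr rfl fun y hy => ?_
    simp only [Finset.mem_compl, Finset.mem_insert, Finset.mem_singleton, not_or] at hy
    rw [contract_adj_of_ne hx hx' hy.1 hy.2, hc y hy.1 hy.2]

theorem deg_contract_of_ne (huv : u ≠ v) (hx : x ≠ u) (hx' : x ≠ v)
    (hcommon : ¬ (G.Adj x u ∧ G.Adj x v)) :
    deg (contract G u v) x = deg G x := by
  simp only [deg, Finset.card_filter]
  exact sum_contract_adj_ite huv hx hx' hcommon _ _ (fun _ _ _ => rfl) (fun _ => rfl)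
    (fun _ => rfl)

theorem Psi_contract_of_ne (huv : u ≠ v) (hnadj : ¬ G.Adj u v)
    (hu : ∀ x, G.Adj u x → deg G x ≤ deg G u) (hv : ∀ x, G.Adj v x → deg G x ≤ deg G v)
    (hcommon : ∀ x, ¬ (G.Adj x u ∧ G.Adj x v)) (hx : x ≠ u) (hx' : x ≠ v) :
    Psi (contract G u v) x = Psi G x := by
  have hdeg := deg_contract_of_ne huv hx hx' (hcommon x)
  refine sum_contract_adj_ite huv hx hx' (hcommon x) _ _ (fun y hy hy' => ?_)
    (fun h => ?_) (fun h => ?_)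
  · rw [hdeg, deg_contract_of_ne huv hy hy' (hcommon y)]
  · rw [hdeg, min_eq_left ((hu x h.symm).trans (deg_le_deg_contract_left huv hnadj)),
      min_eq_left (hu x h.symm)]
  · rw [hdeg, min_eq_left ((hv x h.symm).trans (deg_le_deg_contract_right huv hnadj)),
      min_eq_left (hv x h.symm)]

theorem step_contract_of_ne (huv : u ≠ v) (hnadj : ¬ G.Adj u v)
    (hu : ∀ x, G.Adj u x → deg G x ≤ deg G u) (hv : ∀ x, G.Adj v x → deg G x ≤ deg G v)
    (hcommon : ∀ x, ¬ (G.Adj x u ∧ G.Adj x v)) (hx : x ≠ u) (hx' : x ≠ v) (hy : y ≠ u)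
    (hy' : y ≠ v) :
    step (contract G u v) x y = step G x y := by
  rw [step, step, Psi_contract_of_ne huv hnadj hu hv hcommon hx hx', psi, psi,
    contract_adj_of_ne hx hx' hy hy', deg_contract_of_ne huv hx hx' (hcommon x),
    deg_contract_of_ne huv hy hy' (hcommon y)]

theorem step_contract_right : step (contract G u v) x v = 0 := by
  rw [step, psi, if_neg contract_not_adj_right, zero_div]

end Contraction

end CF

theorem contraction_avoidance_probability_general
    {V : Type*} [Fintype V] [DecidableEq V]
    (G : SimpleGraph V) (u v : V) (huv : u ≠ v)
    (hnadj : ¬ G.Adj u v) (hdist : 2 < G.dist u v)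
    (hu : ∀ x : V, G.Adj u x → CF.deg G x ≤ CF.deg G u)
    (hv : ∀ x : V, G.Adj v x → CF.deg G x ≤ CF.deg G v)
    (w : V) (hwv : w ≠ v) (t : ℕ) :
    CF.avoidProb (CF.contract G u v) w t {u} = CF.avoidProb G w t {u, v} := by
  rw [CF.avoidProb_eq_avoidProbP, CF.avoidProb_eq_avoidProbP, Finset.pair_comm,
    ← CF.avoidProbP_insert_of_forall_eq_zero (fun _ => CF.step_contract_right) hwv]
  refine CF.avoidProbP_congr fun x y hx hy => ?_
  simp only [Finset.mem_insert, Finset.mem_singleton, not_or] at hx hy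
  exact CF.step_contract_of_ne huv hnadj hu hv (G.not_adj_and_adj_of_two_lt_dist hdist)
    hx.2 hx.1 hy.2 hy.1

/-- Let `u ≠ v` be non-adjacent vertices of a connected graph `G` at
distance `> 2`, each of maximal degree in its neighbourhood. Contracting `u` and `v` into
a single vertex `z` (represented here by `u`), for every start `w ∉ {u,v}` and every
`t ≥ 0`, the probability that the biased walk on the contraction avoids `z` during its
first `t` steps equals the probability that the biased walk on `G` avoids both `u` and
`v` during its first `t` steps. -/
theorem contraction_avoidance_probability
    {V : Type*} [Fintype V] [DecidableEq V]
    (G : SimpleGraph V) (hG : G.Connected) (u v : V) (huv : u ≠ v)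
    (hnadj : ¬ G.Adj u v) (hdist : 2 < G.dist u v)
    (hu : ∀ x : V, G.Adj u x → CF.deg G x ≤ CF.deg G u)
    (hv : ∀ x : V, G.Adj v x → CF.deg G x ≤ CF.deg G v)
    (w : V) (hwu : w ≠ u) (hwv : w ≠ v) (t : ℕ) :
    CF.avoidProb (CF.contract G u v) w t {u} = CF.avoidProb G w t {u, v} :=
  contraction_avoidance_probability_general G u v huv hnadj hdist hu hv w hwv t
end
end
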